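/- Let X, Z ∈ ℝ^{d×r} satisfy ‖XXᵀ − ZZᵀ‖_F ≤ ρ·λ_min(ZᵀZ), ρ < 1/2, with XᵀX invertible. Then for any standard basis vector e_i: e_iᵀX(XᵀX)^{−2}XᵀZZᵀX(XᵀX)^{−1}Xᵀe_i ≥ ((1−2ρ)/(1−ρ))·e_iᵀX(XᵀX)^{−1}Xᵀe_i. -/

import Mathlib

open Matrix BigOperators

noncomputable section

/-- Frobenius norm of a real matrix. -/
def frob {m n : ℕ} (A : Matrix (Fin m) (Fin n) ℝ) : ℝ :=
  Real.sqrt (∑ i, ∑ j, (A i j) ^ 2)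

/-- Trace inner product `⟨A,B⟩ = tr(AᵀB)`. -/
def mip {m n : ℕ} (A B : Matrix (Fin m) (Fin n) ℝ) : ℝ := (Aᵀ * B).trace

open Classical in
/-- Smallest eigenvalue of a Hermitian matrix (junk value 0 otherwise). -/
def lammin {n : ℕ} (M : Matrix (Fin n) (Fin n) ℝ) : ℝ :=
  if h : M.IsHermitian then ⨅ i, h.eigenvalues i else 0

open scoped ComplexOrder in
/-- The positive semidefinite square root of a positive semidefinite matrix
(removed from Mathlib; restored with its old definition). -/
def Matrix.PosSemidef.sqrt {n : Type*} [Fintype n] [DecidableEq n] {𝕜 : Type*} [RCLike 𝕜]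
    {A : Matrix n n 𝕜} (hA : A.PosSemidef) : Matrix n n 𝕜 :=
  (hA.1.eigenvectorUnitary : Matrix n n 𝕜) * diagonal ((↑) ∘ (√·) ∘ hA.1.eigenvalues) *
    (star hA.1.eigenvectorUnitary : Matrix n n 𝕜)

/-- Local norm `‖V‖_X = ‖V (XᵀX)^{1/2}‖_F`. -/
def locNorm {d r : ℕ} (X V : Matrix (Fin d) (Fin r) ℝ) : ℝ :=
  frob (V * (Matrix.posSemidef_conjTranspose_mul_self X).sqrt)

/-- Dual local norm `‖V‖_X* = ‖V (XᵀX)^{-1/2}‖_F`. -/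
def dualNorm {d r : ℕ} (X V : Matrix (Fin d) (Fin r) ℝ) : ℝ :=
  frob (V * ((Matrix.posSemidef_conjTranspose_mul_self X).sqrt)⁻¹)

/-- Leverage score / coherence `g_k(X) = e_kᵀ X (XᵀX)⁻¹ Xᵀ e_k`. -/
def lev {d r : ℕ} (k : Fin d) (X : Matrix (Fin d) (Fin r) ℝ) : ℝ :=
  (X * (Xᴴ * X)⁻¹ * Xᴴ) k k

/-- Gradient of the leverage score `∇g_k(X)`. -/
def levGrad {d r : ℕ} (k : Fin d) (X : Matrix (Fin d) (Fin r) ℝ) :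
    Matrix (Fin d) (Fin r) ℝ :=
  (2 : ℝ) • ((1 - X * (Xᴴ * X)⁻¹ * Xᴴ) * Matrix.single k k (1 : ℝ) * X * (Xᴴ * X)⁻¹)

/-- Stochastic gradient sample `SG(X)` for the index pair `(i,j)`. -/
def SG {d r : ℕ} (X Z : Matrix (Fin d) (Fin r) ℝ) (i j : Fin d) :
    Matrix (Fin d) (Fin r) ℝ :=
  (2 * (d : ℝ) ^ 2 * ((X * Xᴴ - Z * Zᴴ) i j)) •
    ((Matrix.single i j (1 : ℝ) + Matrix.single j i (1 : ℝ)) * X)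


/-!
Write `G = XᴴX`, `P = X G⁻¹ Xᴴ`, `E = XXᴴ - ZZᴴ`, `λ = λ_min(ZᴴZ)`, `v = P eᵢ` and
`m = X G⁻² Xᴴ eᵢ`. Substituting `ZZᴴ = XXᴴ - E`, the left side becomes `‖v‖² - mᵀEv` and
`Pᵢᵢ = ‖v‖²`. By Cauchy–Schwarz `mᵀEv ≤ ‖E‖_F ‖m‖ ‖v‖ ≤ ρλ ‖m‖ ‖v‖`, so everything rests on
`(1 - ρ)λ ‖m‖ ≤ ‖v‖ = ‖XXᴴ m‖`, a Weyl-type bound `λ_min(XᴴX) ≥ (1 - ρ)λ`.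

That bound is proved without the spectrum of `XᴴX`. For `y` in the range of `Z`,
`‖Xᴴ y‖² = ‖Zᴴ y‖² + yᵀEy ≥ (1 - ρ)λ ‖y‖²`; hence `XᴴZ` is invertible, every `XᴴXq` equals
`Xᴴ y` for some such `y`, and `‖Xq‖ ≤ ‖y‖` because `Xq` is the least-norm solution. The degenerate
case `λ = 0` cannot occur: it forces `ZZᴴ = XXᴴ`, which makes `Z` injective.
-/

namespace Matrix

section DotProduct

variable {m n : Type*} [Fintype m] [Fintype n]

lemma dotProduct_self_nonneg (v : n → ℝ) : 0 ≤ v ⬝ᵥ v :=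
  Finset.sum_nonneg fun i _ => mul_self_nonneg (v i)

lemma conjTranspose_mulVec_dotProduct (A : Matrix m n ℝ) (v : m → ℝ) (w : n → ℝ) :
    (Aᴴ *ᵥ v) ⬝ᵥ w = v ⬝ᵥ (A *ᵥ w) := by
  rw [conjTranspose_eq_transpose_of_trivial, mulVec_transpose, dotProduct_mulVec]

lemma dotProduct_le_sqrt_mul_sqrt (a b : n → ℝ) : a ⬝ᵥ b ≤ √(a ⬝ᵥ a) * √(b ⬝ᵥ b) := by
  simpa only [dotProduct, sq] using Real.sum_mul_le_sqrt_mul_sqrt Finset.univ a b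

lemma conjTranspose_mul_apply_self [DecidableEq n] (A B : Matrix m n ℝ) (i : n) :
    (Aᴴ * B) i i = (A *ᵥ Pi.single i 1) ⬝ᵥ (B *ᵥ Pi.single i 1) := by
  simp [mul_apply, dotProduct]

lemma mul_dotProduct_conjTranspose_mulVec_le {A : Matrix m n ℝ} {a : m → ℝ} {c : ℝ}
    (h : c * (a ⬝ᵥ a) ≤ (Aᴴ *ᵥ a) ⬝ᵥ (Aᴴ *ᵥ a)) :
    c * ((Aᴴ *ᵥ a) ⬝ᵥ (Aᴴ *ᵥ a)) ≤ ((A * Aᴴ) *ᵥ a) ⬝ᵥ ((A * Aᴴ) *ᵥ a) := by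
  -- Cauchy–Schwarz: `‖Aᴴ a‖² = ⟪a, A Aᴴ a⟫ ≤ ‖a‖ ‖A Aᴴ a‖`, so `h` gives `c ‖a‖ ≤ ‖A Aᴴ a‖`.
  have hcs : (Aᴴ *ᵥ a) ⬝ᵥ (Aᴴ *ᵥ a) ≤ √(a ⬝ᵥ a) * √(((A * Aᴴ) *ᵥ a) ⬝ᵥ ((A * Aᴴ) *ᵥ a)) := by
    rw [conjTranspose_mulVec_dotProduct, mulVec_mulVec]
    exact dotProduct_le_sqrt_mul_sqrt _ _
  rw [← Real.sq_sqrt (dotProduct_self_nonneg a)] at h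
  rw [← Real.sq_sqrt (dotProduct_self_nonneg ((A * Aᴴ) *ᵥ a))]
  have hN : 0 ≤ √(a ⬝ᵥ a) := Real.sqrt_nonneg _
  have hB : 0 ≤ √(((A * Aᴴ) *ᵥ a) ⬝ᵥ ((A * Aᴴ) *ᵥ a)) := Real.sqrt_nonneg _
  generalize √(a ⬝ᵥ a) = N at *
  generalize √(((A * Aᴴ) *ᵥ a) ⬝ᵥ ((A * Aᴴ) *ᵥ a)) = B at *
  have hQ := dotProduct_self_nonneg (Aᴴ *ᵥ a)
  rcases le_or_gt c 0 with hc | hc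
  · nlinarith
  rcases hN.eq_or_lt with hN | hN
  · subst hN
    nlinarith
  have hcN : c * N ≤ B := le_of_mul_le_mul_left (by nlinarith) hN
  nlinarith [mul_le_mul_of_nonneg_left hcs hc.le, mul_le_mul_of_nonneg_right hcN hB]

lemma mul_sqrt_le_sqrt_mul_conjTranspose_mulVec {A : Matrix m n ℝ} {a : m → ℝ} {c : ℝ}
    (hc : 0 ≤ c) (h : c * (a ⬝ᵥ a) ≤ (Aᴴ *ᵥ a) ⬝ᵥ (Aᴴ *ᵥ a)) :
    c * √(a ⬝ᵥ a) ≤ √(((A * Aᴴ) *ᵥ a) ⬝ᵥ ((A * Aᴴ) *ᵥ a)) := by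
  rw [Real.le_sqrt (by positivity) (dotProduct_self_nonneg _), mul_pow,
    Real.sq_sqrt (dotProduct_self_nonneg a)]
  nlinarith [mul_dotProduct_conjTranspose_mulVec_le h]

lemma dotProduct_self_le_of_conjTranspose_mulVec_eq {A : Matrix m n ℝ} {q : n → ℝ} {y : m → ℝ}
    (h : Aᴴ *ᵥ y = Aᴴ *ᵥ (A *ᵥ q)) : (A *ᵥ q) ⬝ᵥ (A *ᵥ q) ≤ y ⬝ᵥ y := by
  have horth : (A *ᵥ q) ⬝ᵥ (y - A *ᵥ q) = 0 := by
    rw [dotProduct_comm, ← conjTranspose_mulVec_dotProduct, mulVec_sub, h, sub_self,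
      zero_dotProduct]
  have hy : y = A *ᵥ q + (y - A *ᵥ q) := by abel
  rw [hy]
  simp only [add_dotProduct, dotProduct_add, horth, dotProduct_comm (y - A *ᵥ q) (A *ᵥ q)]
  linarith [dotProduct_self_nonneg (y - A *ᵥ q)]

end DotProduct

lemma IsHermitian.mul_dotProduct_self_le {n : Type*} [Fintype n] [DecidableEq n]
    {M : Matrix n n ℝ} (hM : M.IsHermitian) {c : ℝ} (hc : ∀ j, c ≤ hM.eigenvalues j)
    (w : n → ℝ) : c * (w ⬝ᵥ w) ≤ w ⬝ᵥ (M *ᵥ w) := by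
  set U : Matrix n n ℝ := (hM.eigenvectorUnitary : Matrix n n ℝ)
  have hUU : Uᴴ * U = 1 := Unitary.coe_star_mul_self hM.eigenvectorUnitary
  have hUU' : U * Uᴴ = 1 := Unitary.coe_mul_star_self hM.eigenvectorUnitary
  have hM' : M = U * diagonal hM.eigenvalues * Uᴴ := by
    conv_lhs => rw [hM.spectral_theorem]
    simp [Unitary.conjStarAlgAut_apply, U, star_eq_conjTranspose]
  have hU : ∀ y v, (U *ᵥ y) ⬝ᵥ (U *ᵥ v) = y ⬝ᵥ v := fun y v => by
    rw [← conjTranspose_mulVec_dotProduct, mulVec_mulVec, hUU, one_mulVec]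
  have hw : w = U *ᵥ (Uᴴ *ᵥ w) := by rw [mulVec_mulVec, hUU', one_mulVec]
  generalize Uᴴ *ᵥ w = y at hw
  subst hw
  rw [hM', ← mulVec_mulVec, ← mulVec_mulVec, mulVec_mulVec (M := Uᴴ), hUU, one_mulVec, hU, hU]
  simp only [dotProduct, mulVec_diagonal, Finset.mul_sum]
  exact Finset.sum_le_sum fun j _ => by nlinarith [hc j, mul_self_nonneg (y j)]

lemma mulVec_injective_of_mul_conjTranspose_eq {m n : Type*} [Fintype m] [Fintype n]
    [DecidableEq n] {X Z : Matrix m n ℝ} (hX : IsUnit (Xᴴ * X).det) (hZX : Z * Zᴴ = X * Xᴴ) :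
    Function.Injective Z.mulVec := by
  -- `(Xᴴ Z)(Zᴴ X) = (Xᴴ X)²` is invertible, hence so is the square matrix `Xᴴ Z`.
  have hdet : (Xᴴ * Z).det * (Zᴴ * X).det = (Xᴴ * X).det * (Xᴴ * X).det := by
    rw [← det_mul, ← det_mul, Matrix.mul_assoc, ← Matrix.mul_assoc Z, hZX]
    simp only [Matrix.mul_assoc]
  have hXZ : IsUnit (Xᴴ * Z).det := isUnit_of_mul_isUnit_left (hdet ▸ hX.mul hX)
  have hinj := mulVec_injective_iff_isUnit.2 ((isUnit_iff_isUnit_det _).2 hXZ)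
  exact fun a b hab => hinj (by simp only [← mulVec_mulVec, hab])

lemma mul_dotProduct_le_of_isUnit_conjTranspose_mul {m n : Type*} [Fintype m] [Fintype n]
    [DecidableEq n] {X Z : Matrix m n ℝ} {c : ℝ} (hc : 0 ≤ c) (hXZ : IsUnit (Xᴴ * Z))
    (hZ : ∀ w, c * ((Z *ᵥ w) ⬝ᵥ (Z *ᵥ w)) ≤ (Xᴴ *ᵥ (Z *ᵥ w)) ⬝ᵥ (Xᴴ *ᵥ (Z *ᵥ w)))
    (q : n → ℝ) : c * ((X *ᵥ q) ⬝ᵥ (X *ᵥ q)) ≤ (Xᴴ *ᵥ (X *ᵥ q)) ⬝ᵥ (Xᴴ *ᵥ (X *ᵥ q)) := by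
  obtain ⟨w, hw⟩ := mulVec_surjective_iff_isUnit.2 hXZ (Xᴴ *ᵥ (X *ᵥ q))
  rw [← mulVec_mulVec] at hw
  rw [← hw]
  exact (mul_le_mul_of_nonneg_left (dotProduct_self_le_of_conjTranspose_mulVec_eq hw) hc).trans
    (hZ w)

section Projection

variable {m n : Type*} [Fintype m] [Fintype n] [DecidableEq n] {X : Matrix m n ℝ}

lemma projection_mul_self (hX : IsUnit (Xᴴ * X).det) :
    (X * (Xᴴ * X)⁻¹ * Xᴴ) * (X * (Xᴴ * X)⁻¹ * Xᴴ) = X * (Xᴴ * X)⁻¹ * Xᴴ := by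
  simp only [Matrix.mul_assoc]
  rw [← Matrix.mul_assoc Xᴴ X, nonsing_inv_mul_cancel_left _ _ hX]

lemma mul_conjTranspose_mul_projection_sq (hX : IsUnit (Xᴴ * X).det) :
    X * Xᴴ * (X * ((Xᴴ * X)⁻¹ * (Xᴴ * X)⁻¹) * Xᴴ) = X * (Xᴴ * X)⁻¹ * Xᴴ := by
  simp only [Matrix.mul_assoc]
  rw [← Matrix.mul_assoc Xᴴ X, mul_nonsing_inv_cancel_left _ _ hX]

lemma projection_sq_mul_mul_conjTranspose (hX : IsUnit (Xᴴ * X).det) :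
    X * ((Xᴴ * X)⁻¹ * (Xᴴ * X)⁻¹) * Xᴴ * (X * Xᴴ) = X * (Xᴴ * X)⁻¹ * Xᴴ := by
  simp only [Matrix.mul_assoc]
  rw [← Matrix.mul_assoc Xᴴ X, nonsing_inv_mul_cancel_left _ _ hX]

lemma projection_apply_self [DecidableEq m] (hX : IsUnit (Xᴴ * X).det) (i : m) :
    (X * (Xᴴ * X)⁻¹ * Xᴴ) i i =
      ((X * (Xᴴ * X)⁻¹ * Xᴴ) *ᵥ Pi.single i 1) ⬝ᵥ ((X * (Xᴴ * X)⁻¹ * Xᴴ) *ᵥ Pi.single i 1) := by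
  rw [← conjTranspose_mul_apply_self,
    (isHermitian_mul_mul_conjTranspose X (isHermitian_conjTranspose_mul_self X).inv).eq,
    projection_mul_self hX]

lemma projection_sq_mul_sub_mul_projection_apply_self [DecidableEq m]
    (hX : IsUnit (Xᴴ * X).det) (E : Matrix m m ℝ) (i : m) :
    (X * ((Xᴴ * X)⁻¹ * (Xᴴ * X)⁻¹) * Xᴴ * (X * Xᴴ - E) * (X * (Xᴴ * X)⁻¹ * Xᴴ)) i i =
      (X * (Xᴴ * X)⁻¹ * Xᴴ) i i -
        ((X * ((Xᴴ * X)⁻¹ * (Xᴴ * X)⁻¹) * Xᴴ) *ᵥ Pi.single i 1) ⬝ᵥ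
          (E *ᵥ ((X * (Xᴴ * X)⁻¹ * Xᴴ) *ᵥ Pi.single i 1)) := by
  have hGi := (isHermitian_conjTranspose_mul_self X).inv
  have hT := (isHermitian_mul_mul_conjTranspose X
    (by simpa only [hGi.eq] using isHermitian_conjTranspose_mul_self (Xᴴ * X)⁻¹)).eq
  rw [Matrix.mul_sub, Matrix.sub_mul, projection_sq_mul_mul_conjTranspose hX,
    projection_mul_self hX, Matrix.sub_apply, Matrix.mul_assoc _ E, ← hT,
    conjTranspose_mul_apply_self, mulVec_mulVec, hT]

end Projection

end Matrix

lemma frob_nonneg {m n : ℕ} (A : Matrix (Fin m) (Fin n) ℝ) : 0 ≤ frob A := Real.sqrt_nonneg _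

lemma frob_eq_zero {m n : ℕ} {A : Matrix (Fin m) (Fin n) ℝ} : frob A = 0 ↔ A = 0 := by
  have hrow : ∀ i ∈ Finset.univ, 0 ≤ ∑ j, A i j ^ 2 := fun i _ =>
    Finset.sum_nonneg fun j _ => sq_nonneg _
  rw [frob, Real.sqrt_eq_zero (Finset.sum_nonneg hrow), Finset.sum_eq_zero_iff_of_nonneg hrow,
    ← Matrix.ext_iff]
  simp [Finset.sum_eq_zero_iff_of_nonneg (fun j _ => sq_nonneg (A _ j))]

lemma dotProduct_mulVec_le_frob {m n : ℕ} (E : Matrix (Fin m) (Fin n) ℝ) (a : Fin m → ℝ)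
    (b : Fin n → ℝ) : a ⬝ᵥ (E *ᵥ b) ≤ frob E * √(a ⬝ᵥ a) * √(b ⬝ᵥ b) := by
  have h := Real.sum_mul_le_sqrt_mul_sqrt Finset.univ (fun p : Fin m × Fin n => E p.1 p.2)
    (fun p => a p.1 * b p.2)
  simp only [Fintype.sum_prod_type, mul_pow, ← Finset.mul_sum, ← Finset.sum_mul] at h
  rw [mul_assoc, ← Real.sqrt_mul (dotProduct_self_nonneg a)]
  convert h using 2
  · simp only [dotProduct, mulVec, Finset.mul_sum]
    exact Finset.sum_congr rfl fun i _ => Finset.sum_congr rfl fun j _ => by ring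
  · rfl
  · simp only [dotProduct, sq]

lemma dotProduct_mulVec_le_of_frob_le {n : ℕ} {E : Matrix (Fin n) (Fin n) ℝ} {a b : Fin n → ℝ}
    {ρ l : ℝ} (hρ : ρ < 1) (hl : 0 < l) (hE : frob E ≤ ρ * l)
    (hab : (1 - ρ) * l * √(a ⬝ᵥ a) ≤ √(b ⬝ᵥ b)) :
    a ⬝ᵥ (E *ᵥ b) ≤ ρ / (1 - ρ) * (b ⬝ᵥ b) := by
  have hρ0 : 0 ≤ ρ := nonneg_of_mul_nonneg_left ((frob_nonneg E).trans hE) hl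
  have hc : 0 < (1 - ρ) * l := mul_pos (by linarith) hl
  have ha : √(a ⬝ᵥ a) ≤ √(b ⬝ᵥ b) / ((1 - ρ) * l) := by rwa [le_div_iff₀ hc, mul_comm]
  calc a ⬝ᵥ (E *ᵥ b) ≤ frob E * √(a ⬝ᵥ a) * √(b ⬝ᵥ b) := dotProduct_mulVec_le_frob E a b
    _ ≤ ρ * l * (√(b ⬝ᵥ b) / ((1 - ρ) * l)) * √(b ⬝ᵥ b) := by gcongr
    _ = ρ / (1 - ρ) * (b ⬝ᵥ b) := by
      rw [mul_assoc, div_mul_eq_mul_div, Real.mul_self_sqrt (dotProduct_self_nonneg b)]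
      field_simp [(by linarith : 1 - ρ ≠ 0)]

section SmallestEigenvalue

variable {n : ℕ}

lemma lammin_le_eigenvalues {M : Matrix (Fin n) (Fin n) ℝ} (hM : M.IsHermitian) (j : Fin n) :
    lammin M ≤ hM.eigenvalues j := by
  rw [lammin, dif_pos hM]
  exact ciInf_le (Set.finite_range _).bddBelow j

lemma lammin_mul_dotProduct_self_le {M : Matrix (Fin n) (Fin n) ℝ} (hM : M.IsHermitian)
    (w : Fin n → ℝ) : lammin M * (w ⬝ᵥ w) ≤ w ⬝ᵥ (M *ᵥ w) :=
  hM.mul_dotProduct_self_le (lammin_le_eigenvalues hM) w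

lemma lammin_conjTranspose_mul_self_nonneg {d : ℕ} (Z : Matrix (Fin d) (Fin n) ℝ) :
    0 ≤ lammin (Zᴴ * Z) := by
  rw [lammin, dif_pos (isHermitian_conjTranspose_mul_self Z)]
  exact Real.iInf_nonneg (eigenvalues_conjTranspose_mul_self_nonneg Z)

lemma lammin_conjTranspose_mul_self_pos {d : ℕ} [Nonempty (Fin n)]
    {Z : Matrix (Fin d) (Fin n) ℝ} (hZ : Function.Injective Z.mulVec) : 0 < lammin (Zᴴ * Z) := by
  rw [lammin, dif_pos (isHermitian_conjTranspose_mul_self Z)]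
  obtain ⟨j, hj⟩ :=
    exists_eq_ciInf_of_finite (f := (isHermitian_conjTranspose_mul_self Z).eigenvalues)
  rw [← hj]
  exact (PosDef.conjTranspose_mul_self Z hZ).eigenvalues_pos j

end SmallestEigenvalue

section Perturbation

variable {d r : ℕ} {X Z : Matrix (Fin d) (Fin r) ℝ} {ρ : ℝ}

lemma lammin_pos_of_frob_le [Nonempty (Fin r)] (hX : IsUnit (Xᴴ * X).det)
    (h : frob (X * Xᴴ - Z * Zᴴ) ≤ ρ * lammin (Zᴴ * Z)) : 0 < lammin (Zᴴ * Z) := by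
  obtain h0 | hpos := (lammin_conjTranspose_mul_self_nonneg Z).eq_or_lt
  · rw [← h0, mul_zero] at h
    have hE := frob_eq_zero.1 (h.antisymm (frob_nonneg _))
    exact lammin_conjTranspose_mul_self_pos
      (mulVec_injective_of_mul_conjTranspose_eq hX (sub_eq_zero.1 hE).symm)
  · exact hpos

lemma mul_dotProduct_range_le_of_frob_le (h : frob (X * Xᴴ - Z * Zᴴ) ≤ ρ * lammin (Zᴴ * Z))
    (w : Fin r → ℝ) :
    (1 - ρ) * lammin (Zᴴ * Z) * ((Z *ᵥ w) ⬝ᵥ (Z *ᵥ w)) ≤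
      (Xᴴ *ᵥ (Z *ᵥ w)) ⬝ᵥ (Xᴴ *ᵥ (Z *ᵥ w)) := by
  set y := Z *ᵥ w
  have hZ : lammin (Zᴴ * Z) * (y ⬝ᵥ y) ≤ (Zᴴ *ᵥ y) ⬝ᵥ (Zᴴ *ᵥ y) := by
    have hw := lammin_mul_dotProduct_self_le (isHermitian_conjTranspose_mul_self Z) w
    rw [← mulVec_mulVec, ← conjTranspose_mulVec_dotProduct, conjTranspose_conjTranspose] at hw
    have := mul_dotProduct_conjTranspose_mulVec_le (A := Zᴴ) (a := w)
      (by rwa [conjTranspose_conjTranspose])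
    rwa [conjTranspose_conjTranspose, ← mulVec_mulVec] at this
  have hsplit : (Xᴴ *ᵥ y) ⬝ᵥ (Xᴴ *ᵥ y) =
      (Zᴴ *ᵥ y) ⬝ᵥ (Zᴴ *ᵥ y) + y ⬝ᵥ ((X * Xᴴ - Z * Zᴴ) *ᵥ y) := by
    simp only [conjTranspose_mulVec_dotProduct, sub_mulVec, dotProduct_sub, mulVec_mulVec]
    ring
  have hE := dotProduct_mulVec_le_frob (X * Xᴴ - Z * Zᴴ) (-y) y
  rw [neg_dotProduct, neg_dotProduct, dotProduct_neg, neg_neg, mul_assoc,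
    Real.mul_self_sqrt (dotProduct_self_nonneg y)] at hE
  nlinarith [mul_le_mul_of_nonneg_right h (dotProduct_self_nonneg y)]

lemma isUnit_conjTranspose_mul_of_frob_le (hρ : ρ < 1) (hZ : 0 < lammin (Zᴴ * Z))
    (h : frob (X * Xᴴ - Z * Zᴴ) ≤ ρ * lammin (Zᴴ * Z)) : IsUnit (Xᴴ * Z) := by
  refine mulVec_injective_iff_isUnit.1 fun a b hab => sub_eq_zero.1 ?_
  have hker : Xᴴ *ᵥ (Z *ᵥ (a - b)) = 0 := by rw [mulVec_mulVec, mulVec_sub, hab, sub_self]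
  have hZw := mul_dotProduct_range_le_of_frob_le h (a - b)
  rw [hker, zero_dotProduct] at hZw
  have hZw0 : (Z *ᵥ (a - b)) ⬝ᵥ (Z *ᵥ (a - b)) = 0 :=
    le_antisymm (nonpos_of_mul_nonpos_right hZw (mul_pos (by linarith) hZ))
      (dotProduct_self_nonneg _)
  have hw := lammin_mul_dotProduct_self_le (isHermitian_conjTranspose_mul_self Z) (a - b)
  rw [← mulVec_mulVec, ← conjTranspose_mulVec_dotProduct, conjTranspose_conjTranspose, hZw0] at hw
  exact dotProduct_self_eq_zero.1
    (le_antisymm (nonpos_of_mul_nonpos_right hw hZ) (dotProduct_self_nonneg _))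

lemma mul_dotProduct_gram_le_of_frob_le [Nonempty (Fin r)] (hρ : ρ < 1)
    (hX : IsUnit (Xᴴ * X).det) (h : frob (X * Xᴴ - Z * Zᴴ) ≤ ρ * lammin (Zᴴ * Z))
    (q : Fin r → ℝ) :
    (1 - ρ) * lammin (Zᴴ * Z) * ((X *ᵥ q) ⬝ᵥ (X *ᵥ q)) ≤
      (Xᴴ *ᵥ (X *ᵥ q)) ⬝ᵥ (Xᴴ *ᵥ (X *ᵥ q)) := by
  have hZ := lammin_pos_of_frob_le hX h
  exact mul_dotProduct_le_of_isUnit_conjTranspose_mul (mul_pos (by linarith) hZ).le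
    (isUnit_conjTranspose_mul_of_frob_le hρ hZ h) (mul_dotProduct_range_le_of_frob_le h) q

end Perturbation

/-- Diagonal lower bound used in the coherence-descent lemma. -/
theorem diagonal_lower_bound {d r : ℕ} (X Z : Matrix (Fin d) (Fin r) ℝ) (ρ : ℝ)
    (hρ : ρ < 1 / 2) (hX : IsUnit (Xᴴ * X).det)
    (h : frob (X * Xᴴ - Z * Zᴴ) ≤ ρ * lammin (Zᴴ * Z)) (i : Fin d) :
    (X * ((Xᴴ * X)⁻¹ * (Xᴴ * X)⁻¹) * Xᴴ * (Z * Zᴴ) * (X * (Xᴴ * X)⁻¹ * Xᴴ)) i i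
      ≥ (1 - 2 * ρ) / (1 - ρ) * (X * (Xᴴ * X)⁻¹ * Xᴴ) i i := by
  rcases isEmpty_or_nonempty (Fin r) with hr | hr
  · obtain rfl : X = 0 := Subsingleton.elim _ _
    simp
  rw [ge_iff_le, ← sub_sub_cancel (X * Xᴴ) (Z * Zᴴ),
    projection_sq_mul_sub_mul_projection_apply_self hX, projection_apply_self hX]
  have hlam := lammin_pos_of_frob_le hX h
  set s : Fin d → ℝ := Pi.single i 1
  set v := (X * (Xᴴ * X)⁻¹ * Xᴴ) *ᵥ s
  set m := (X * ((Xᴴ * X)⁻¹ * (Xᴴ * X)⁻¹) * Xᴴ) *ᵥ s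
  have hmv : (1 - ρ) * lammin (Zᴴ * Z) * √(m ⬝ᵥ m) ≤ √(v ⬝ᵥ v) := by
    have hv : v = (X * Xᴴ) *ᵥ m := by rw [mulVec_mulVec, mul_conjTranspose_mul_projection_sq hX]
    have hm : m = X *ᵥ (((Xᴴ * X)⁻¹ * (Xᴴ * X)⁻¹ * Xᴴ) *ᵥ s) := by
      simp only [m, mulVec_mulVec, Matrix.mul_assoc]
    rw [hv, hm]
    exact mul_sqrt_le_sqrt_mul_conjTranspose_mulVec (mul_pos (by linarith) hlam).le
      (mul_dotProduct_gram_le_of_frob_le (by linarith) hX h _)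
  have hE := dotProduct_mulVec_le_of_frob_le (by linarith) hlam h hmv
  have hcoef : (1 - 2 * ρ) / (1 - ρ) = 1 - ρ / (1 - ρ) := by
    field_simp [(by linarith : 1 - ρ ≠ 0)]
    ring
  rw [hcoef, sub_mul, one_mul]
  linarith
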